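/- Let G be a graph with no cycle of length 3 and no cycle of length 5, let F_1, …, F_n be matchings of size n in G, and let R be a rainbow matching of maximum size. For e ∈ R let deg(e) be the number of unrepresented matchings F_i for which e is half-F_i-wasteful, and let D = {e ∈ R : deg(e) ≥ 3}. Then there exist sets S(e) ⊆ R for e ∈ D such that: (1) |S(e)| = deg(e); (2) every f ∈ S(e) satisfies deg(f) = 1; and (3) S(e) ∩ S(e') = ∅ whenever e, e' ∈ D are distinct. -/

import Mathlib

/-- Two graph edges intersect (share a vertex). -/
def Meets {V : Type*} (e f : Sym2 V) : Prop := ∃ v, v ∈ e ∧ v ∈ f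

/-- `g` intersects `e` and no other edge of the matching `R`. -/
def MeetsOnly {V : Type*} (R : Finset (Sym2 V)) (g e : Sym2 V) : Prop :=
  Meets g e ∧ ∀ f ∈ R, f ≠ e → ¬ Meets g f

/-- The pair `{e, f}` of edges of `R` is half-`A`-wasteful: there are edges
`g_e, g_f, g_{ef} ∈ A` such that `g_e` intersects `e` and no other edge of `R`, `g_f`
intersects `f` and no other edge of `R`, and `g_{ef}` intersects both `e` and `f`. -/
def HalfWastefulPair {V : Type*} (R A : Finset (Sym2 V)) (e f : Sym2 V) : Prop :=
  ∃ ge ∈ A, ∃ gf ∈ A, ∃ gef ∈ A,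
    MeetsOnly R ge e ∧ MeetsOnly R gf f ∧ Meets gef e ∧ Meets gef f

/-- The edge `e ∈ R` is half-`A`-wasteful: some pair `{e, f}` with `f ∈ R` is
half-`A`-wasteful. -/
def HalfWasteful {V : Type*} (R A : Finset (Sym2 V)) (e : Sym2 V) : Prop :=
  ∃ f ∈ R, f ≠ e ∧ HalfWastefulPair R A e f

/-- The number of unrepresented matchings `F i` (i.e. `i ∉ I`) for which `e` is
half-`F i`-wasteful. -/
noncomputable def hwDeg {V : Type*} {n : ℕ} (F : Fin n → Finset (Sym2 V))
    (I : Finset (Fin n)) (R : Finset (Sym2 V)) (e : Sym2 V) : ℕ :=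
  {i : Fin n | i ∉ I ∧ HalfWasteful R (F i) e}.ncard

/-!
For every matching `F i` making `e` half-wasteful choose a partner `f` with `{e, f}`
half-`F i`-wasteful, and let `S(e)` be the set of these partners. A half-`F i`-wasteful pair
`{e, f}` is an alternating path `u a b c d w` with `e = ab`, `f = cd`, the edges `ua`, `bc`, `dw`
in `F i` and `u`, `w` uncovered by `R`. If `deg e ≥ 3` and `f` were also half-`F j`-wasteful for
some `j ≠ i`, then `f` would carry a pendant edge of `F j`, and `e` one of a third colour `k`.
Maximality and the absence of triangles force these pendants to sit at `d` and `a`, and then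
either they close a 5-cycle through `a b c d`, or exchanging `ab`, `cd` for three edges of
colours `k`, `i`, `j` enlarges `R`. Hence every partner has degree `1`, which makes the partners
of `e` distinct; and two edges of `R` with a common partner for the same `F i` would force two
distinct edges of `F i` to meet.
-/

open Finset

section Cycles

variable {V : Type*} {G : SimpleGraph V}

def NoCycleOfLength (G : SimpleGraph V) (k : ℕ) : Prop :=
  ∀ (v : V) (w : G.Walk v v), w.IsCycle → w.length ≠ k

theorem NoCycleOfLength.not_adj_of_adj_of_adj (h : NoCycleOfLength G 3) {x y z : V}
    (hxy : G.Adj x y) (hyz : G.Adj y z) : ¬ G.Adj z x := by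
  intro hzx
  have hxz : x ≠ z := fun h => G.irrefl (h ▸ hzx)
  refine h x (.cons hxy (.cons hyz (.cons hzx .nil))) ?_ rfl
  simp [SimpleGraph.Walk.isCycle_def, SimpleGraph.Walk.isTrail_def, hxy.ne, hyz.ne, hzx.ne,
    hxz, hxy.ne.symm]

theorem NoCycleOfLength.not_adj_of_path_four (h : NoCycleOfLength G 5) {v₁ v₂ v₃ v₄ v₅ : V}
    (h₁₂ : G.Adj v₁ v₂) (h₂₃ : G.Adj v₂ v₃) (h₃₄ : G.Adj v₃ v₄) (h₄₅ : G.Adj v₄ v₅)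
    (h₁₃ : v₁ ≠ v₃) (h₁₄ : v₁ ≠ v₄) (h₂₄ : v₂ ≠ v₄) (h₂₅ : v₂ ≠ v₅) (h₃₅ : v₃ ≠ v₅) :
    ¬ G.Adj v₅ v₁ := by
  intro h₅₁
  refine h v₁ (.cons h₁₂ (.cons h₂₃ (.cons h₃₄ (.cons h₄₅ (.cons h₅₁ .nil))))) ?_ rfl
  simp [SimpleGraph.Walk.isCycle_def, SimpleGraph.Walk.isTrail_def, h₁₂.ne, h₂₃.ne, h₃₄.ne,
    h₄₅.ne, h₅₁.ne, h₁₃, h₁₄, h₂₄, h₂₅, h₃₅, h₁₃.symm, h₁₄.symm,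
    h₁₂.ne.symm, h₅₁.ne.symm]

end Cycles

section Matchings

variable {V : Type*} {M R S X : Finset (Sym2 V)} {e f : Sym2 V} {a b x y v w : V}

theorem Meets.symm (h : Meets e f) : Meets f e :=
  let ⟨v, hve, hvf⟩ := h; ⟨v, hvf, hve⟩

theorem meets_comm : Meets e f ↔ Meets f e :=
  ⟨Meets.symm, Meets.symm⟩

theorem not_meets_iff : ¬ Meets e f ↔ ∀ v, v ∈ e → v ∉ f := by
  simp [Meets]

theorem not_meets_mk_mk : ¬ Meets s(a, b) s(x, y) ↔ a ≠ x ∧ a ≠ y ∧ b ≠ x ∧ b ≠ y := by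
  simp [Meets, or_and_right, exists_or, not_or, and_assoc]

def IsEdgeMatching (M : Finset (Sym2 V)) : Prop :=
  (M : Set (Sym2 V)).Pairwise fun e f => ¬ Meets e f

theorem IsEdgeMatching.eq_of_mem (hM : IsEdgeMatching M) (he : e ∈ M) (hf : f ∈ M)
    (hve : v ∈ e) (hvf : v ∈ f) : e = f :=
  by_contra fun hef => hM he hf hef ⟨v, hve, hvf⟩

def Uncovered (R : Finset (Sym2 V)) (v : V) : Prop := ∀ g ∈ R, v ∉ g

theorem Uncovered.mono (hv : Uncovered R v) (hSR : S ⊆ R) : Uncovered S v :=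
  fun g hg => hv g (hSR hg)

theorem Uncovered.ne_of_mem (hw : Uncovered R w) (he : e ∈ R) (hv : v ∈ e) : w ≠ v :=
  fun h => hw e he (h ▸ hv)

theorem IsEdgeMatching.uncovered_sdiff [DecidableEq V] (hR : IsEdgeMatching R) (he : e ∈ R)
    (hv : v ∈ e) (heX : e ∈ X) : Uncovered (R \ X) v := by
  intro g hg hvg
  rw [mem_sdiff] at hg
  exact hg.2 (hR.eq_of_mem hg.1 he hvg hv ▸ heX)

end Matchings

section Rainbow

variable {V : Type*} {n : ℕ} {F : Fin n → Finset (Sym2 V)} {I J : Finset (Fin n)}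
  {r d : Fin n → Sym2 V}

def IsRainbow (F : Fin n → Finset (Sym2 V)) (J : Finset (Fin n)) (d : Fin n → Sym2 V) : Prop :=
  (∀ i ∈ J, d i ∈ F i) ∧ (J : Set (Fin n)).Pairwise fun i j => ¬ Meets (d i) (d j)

def IsMaxRainbow (F : Fin n → Finset (Sym2 V)) (I : Finset (Fin n)) (r : Fin n → Sym2 V) :
    Prop :=
  IsRainbow F I r ∧ ∀ J d, IsRainbow F J d → J.card ≤ I.card

theorem IsRainbow.injOn (hI : IsRainbow F I r) : Set.InjOn r I := by
  intro i hi j hj hij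
  by_contra hne
  obtain ⟨v, hv⟩ : ∃ v, v ∈ r i := (r i).ind (fun x _ => ⟨x, Sym2.mem_mk_left x _⟩)
  exact hI.2 hi hj hne ⟨v, hv, hij ▸ hv⟩

theorem IsRainbow.isEdgeMatching_image [DecidableEq V] (hI : IsRainbow F I r) :
    IsEdgeMatching (I.image r) := by
  rintro _ he _ hf hef
  obtain ⟨i, hi, rfl⟩ := mem_image.1 he
  obtain ⟨j, hj, rfl⟩ := mem_image.1 hf
  exact hI.2 hi hj fun h => hef (h ▸ rfl)

theorem IsRainbow.mem_edgeSet_of_mem_image [DecidableEq V] {G : SimpleGraph V}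
    (hI : IsRainbow F I r) (hFG : ∀ i, ∀ g ∈ F i, g ∈ G.edgeSet) {e : Sym2 V}
    (he : e ∈ I.image r) : e ∈ G.edgeSet := by
  obtain ⟨i, hi, rfl⟩ := mem_image.1 he
  exact hFG i _ (hI.1 i hi)

/-- The edges of `J` together with those of `I` outside `X` form a rainbow matching. -/
theorem IsMaxRainbow.card_le_of_exchange [DecidableEq V] (hI : IsMaxRainbow F I r)
    (hd : IsRainbow F J d) (hJI : Disjoint J I) (X : Finset (Sym2 V))
    (hsep : ∀ j ∈ J, ∀ v ∈ d j, Uncovered (I.image r \ X) v) : J.card ≤ X.card := by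
  set K := I.filter fun i => r i ∉ X
  have hKI : K ⊆ I := filter_subset _ _
  have hJK : Disjoint J K := hJI.mono_right hKI
  set d' : Fin n → Sym2 V := fun m => if m ∈ J then d m else r m
  have hd'J : ∀ m ∈ J, d' m = d m := fun m hm => if_pos hm
  have hd'K : ∀ m ∈ K, d' m = r m := fun m hm => if_neg (disjoint_right.1 hJK hm)
  have hcross : ∀ j ∈ J, ∀ k ∈ K, ¬ Meets (d j) (r k) := by
    rintro j hj k hk ⟨v, hvj, hvk⟩
    obtain ⟨hkI, hkX⟩ := mem_filter.1 hk
    exact hsep j hj v hvj (r k) (mem_sdiff.2 ⟨mem_image_of_mem r hkI, hkX⟩) hvk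
  have hrainbow : IsRainbow F (J ∪ K) d' := by
    constructor
    · intro m hm
      rcases mem_union.1 hm with hm | hm
      · rw [hd'J m hm]; exact hd.1 m hm
      · rw [hd'K m hm]; exact hI.1.1 m (hKI hm)
    · intro p hp q hq hpq
      rcases mem_union.1 hp with hp | hp <;> rcases mem_union.1 hq with hq | hq
      · rw [hd'J p hp, hd'J q hq]; exact hd.2 hp hq hpq
      · rw [hd'J p hp, hd'K q hq]; exact hcross p hp q hq
      · rw [hd'K p hp, hd'J q hq]; exact fun h => hcross q hq p hp h.symm
      · rw [hd'K p hp, hd'K q hq]; exact hI.1.2 (hKI hp) (hKI hq) hpq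
  have hmax : J.card + K.card ≤ I.card := card_union_of_disjoint hJK ▸ hI.2 _ _ hrainbow
  have hrest : (I.filter fun i => r i ∈ X).card ≤ X.card :=
    card_le_card_of_injOn r (fun i hi => (mem_filter.1 hi).2)
      (hI.1.injOn.mono fun i hi => (mem_filter.1 hi).1)
  have hsplit : (I.filter fun i => r i ∈ X).card + K.card = I.card :=
    card_filter_add_card_filter_not _
  omega

end Rainbow

section Exchange

variable {V : Type*} [DecidableEq V] {n : ℕ} {F : Fin n → Finset (Sym2 V)} {I : Finset (Fin n)}
  {r : Fin n → Sym2 V} {i₁ i₂ i₃ : Fin n} {g₁ g₂ g₃ : Sym2 V}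

theorem IsMaxRainbow.false_of_exchange_two (hI : IsMaxRainbow F I r) (X : Finset (Sym2 V))
    (hX : X.card < 2) (hi₁ : i₁ ∉ I) (hi₂ : i₂ ∉ I) (h₁₂ : i₁ ≠ i₂)
    (hg₁ : g₁ ∈ F i₁) (hg₂ : g₂ ∈ F i₂) (hg₁₂ : ¬ Meets g₁ g₂)
    (hs₁ : ∀ v ∈ g₁, Uncovered (I.image r \ X) v) (hs₂ : ∀ v ∈ g₂, Uncovered (I.image r \ X) v) :
    False := by
  set d := Function.update (fun _ => g₂) i₁ g₁
  have hd : IsRainbow F {i₁, i₂} d := by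
    refine ⟨?_, ?_⟩
    · simp [d, hg₁, hg₂, h₁₂.symm]
    · simp [d, Set.pairwise_insert, h₁₂.symm, hg₁₂, meets_comm]
  have := hI.card_le_of_exchange hd (by simp [hi₁, hi₂]) X ?_
  · rw [card_pair h₁₂] at this
    omega
  · simpa [d, h₁₂.symm] using ⟨hs₁, hs₂⟩

theorem IsMaxRainbow.false_of_exchange_three (hI : IsMaxRainbow F I r) (X : Finset (Sym2 V))
    (hX : X.card < 3) (hi₁ : i₁ ∉ I) (hi₂ : i₂ ∉ I) (hi₃ : i₃ ∉ I)
    (h₁₂ : i₁ ≠ i₂) (h₁₃ : i₁ ≠ i₃) (h₂₃ : i₂ ≠ i₃)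
    (hg₁ : g₁ ∈ F i₁) (hg₂ : g₂ ∈ F i₂) (hg₃ : g₃ ∈ F i₃)
    (hg₁₂ : ¬ Meets g₁ g₂) (hg₁₃ : ¬ Meets g₁ g₃) (hg₂₃ : ¬ Meets g₂ g₃)
    (hs₁ : ∀ v ∈ g₁, Uncovered (I.image r \ X) v) (hs₂ : ∀ v ∈ g₂, Uncovered (I.image r \ X) v)
    (hs₃ : ∀ v ∈ g₃, Uncovered (I.image r \ X) v) : False := by
  set d := Function.update (Function.update (fun _ => g₃) i₂ g₂) i₁ g₁
  have hd : IsRainbow F {i₁, i₂, i₃} d := by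
    refine ⟨?_, ?_⟩
    · simp [d, hg₁, hg₂, hg₃, h₁₂.symm, h₁₃.symm, h₂₃.symm]
    · simp [d, Set.pairwise_insert, h₁₂.symm, h₁₃.symm, h₂₃.symm, hg₁₂, hg₁₃, hg₂₃, meets_comm]
  have := hI.card_le_of_exchange hd (by simp [hi₁, hi₂, hi₃]) X ?_
  · rw [card_insert_of_notMem (by simp [h₁₂, h₁₃]), card_pair h₂₃] at this
    omega
  · simpa [d, h₁₂.symm, h₁₃.symm, h₂₃.symm] using ⟨hs₁, hs₂, hs₃⟩

end Exchange

section Configuration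

variable {V : Type*} {R A : Finset (Sym2 V)} {e e' f g : Sym2 V} {b : V}

def HasPendant (R A : Finset (Sym2 V)) (x : V) : Prop := ∃ w, s(x, w) ∈ A ∧ Uncovered R w

theorem HalfWastefulPair.symm (h : HalfWastefulPair R A e f) : HalfWastefulPair R A f e :=
  let ⟨ge, hge, gf, hgf, gef, hgef, hoe, hof, hme, hmf⟩ := h
  ⟨gf, hgf, ge, hge, gef, hgef, hof, hoe, hmf, hme⟩

theorem MeetsOnly.exists_hasPendant (hg : MeetsOnly R g e) (hgA : g ∈ A) (hgd : ¬ g.IsDiag)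
    (hb : b ∈ e) (hbg : b ∉ g) : ∃ a, e = s(a, b) ∧ HasPendant R A a := by
  obtain ⟨a, hag, hae⟩ := hg.1
  have hab : a ≠ b := fun h => hbg (h ▸ hag)
  obtain ⟨u, rfl⟩ := Sym2.mem_iff_exists.1 hag
  refine ⟨a, (Sym2.mem_and_mem_iff hab).1 ⟨hae, hb⟩, u, hgA, fun g' hg' hug' => ?_⟩
  by_cases hg'e : g' = e
  · subst hg'e
    rcases Sym2.mem_iff.1 ((Sym2.mem_and_mem_iff hab).1 ⟨hae, hb⟩ ▸ hug') with rfl | rfl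
    · exact hgd (Sym2.mk_isDiag_iff.2 rfl)
    · exact hbg (Sym2.mem_mk_right _ _)
  · exact hg.2 g' hg' hg'e ⟨u, Sym2.mem_mk_right _ _, hug'⟩

theorem HalfWastefulPair.exists_path (hR : IsEdgeMatching R) (hA : IsEdgeMatching A)
    (hAd : ∀ g ∈ A, ¬ g.IsDiag) (he : e ∈ R) (hf : f ∈ R) (hef : e ≠ f)
    (h : HalfWastefulPair R A e f) :
    ∃ a b c d, e = s(a, b) ∧ f = s(c, d) ∧ s(b, c) ∈ A ∧ HasPendant R A a ∧ HasPendant R A d := by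
  obtain ⟨ge, hge, gf, hgf, gef, hgef, hoe, hof, ⟨b, hbgef, hbe⟩, ⟨c, hcgef, hcf⟩⟩ := h
  have hbc : b ≠ c := fun h => hR he hf hef ⟨b, hbe, h ▸ hcf⟩
  have hbge : b ∉ ge := by
    have hne : ge ≠ gef := by
      rintro rfl
      exact hoe.2 f hf hef.symm ⟨c, hcgef, hcf⟩
    exact fun hb => hA hge hgef hne ⟨b, hb, hbgef⟩
  have hcgf : c ∉ gf := by
    have hne : gf ≠ gef := by
      rintro rfl
      exact hof.2 e he hef ⟨b, hbgef, hbe⟩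
    exact fun hc => hA hgf hgef hne ⟨c, hc, hcgef⟩
  obtain ⟨a, rfl, ha⟩ := hoe.exists_hasPendant hge (hAd ge hge) hbe hbge
  obtain ⟨d, rfl, hd⟩ := hof.exists_hasPendant hgf (hAd gf hgf) hcf hcgf
  exact ⟨a, b, c, d, rfl, Sym2.eq_swap, (Sym2.mem_and_mem_iff hbc).1 ⟨hbgef, hcgef⟩ ▸ hgef, ha, hd⟩

theorem HalfWasteful.exists_hasPendant (hR : IsEdgeMatching R) (hA : IsEdgeMatching A)
    (hAd : ∀ g ∈ A, ¬ g.IsDiag) (hf : f ∈ R) (h : HalfWasteful R A f) :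
    ∃ x ∈ f, HasPendant R A x := by
  obtain ⟨g, hg, hgf, hp⟩ := h
  obtain ⟨a, b, c, d, rfl, -, -, ha, -⟩ := hp.exists_path hR hA hAd hf hg hgf.symm
  exact ⟨a, Sym2.mem_mk_left _ _, ha⟩

theorem HalfWastefulPair.left_unique (hR : IsEdgeMatching R) (hA : IsEdgeMatching A)
    (hAd : ∀ g ∈ A, ¬ g.IsDiag) (he : e ∈ R) (he' : e' ∈ R) (hf : f ∈ R) (hef : e ≠ f)
    (he'f : e' ≠ f) (h : HalfWastefulPair R A e f) (h' : HalfWastefulPair R A e' f) : e = e' := by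
  obtain ⟨a, b, c, d, rfl, rfl, hbc, -, w, hdw, hw⟩ := h.exists_path hR hA hAd he hf hef
  obtain ⟨a', b', c', d', rfl, hf', hbc', -⟩ := h'.exists_path hR hA hAd he' hf he'f
  by_contra hne
  have hb'e : b' ∉ s(a, b) := fun hb' => hR he' he (Ne.symm hne) ⟨b', Sym2.mem_mk_right _ _, hb'⟩
  have hb'f : b' ∉ s(c, d) := fun hb' => hR he' hf he'f ⟨b', Sym2.mem_mk_right _ _, hb'⟩
  have hc' : c' ∈ s(c, d) := hf' ▸ Sym2.mem_mk_left _ _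
  rcases Sym2.mem_iff.1 hc' with rfl | rfl
  · have := hA.eq_of_mem hbc hbc' (Sym2.mem_mk_right _ _) (Sym2.mem_mk_right _ _)
    rcases Sym2.mem_iff.1 (this ▸ Sym2.mem_mk_left b' c') with rfl | rfl
    · exact hb'e (Sym2.mem_mk_right _ _)
    · exact hb'f (Sym2.mem_mk_left _ _)
  · have := hA.eq_of_mem hdw hbc' (Sym2.mem_mk_left _ _) (Sym2.mem_mk_right _ _)
    rcases Sym2.mem_iff.1 (this ▸ Sym2.mem_mk_left b' c') with rfl | rfl
    · exact hb'f (Sym2.mem_mk_right _ _)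
    · exact hw _ he' (Sym2.mem_mk_right _ _)

end Configuration

section Maximality

variable {V : Type*} [DecidableEq V] {G : SimpleGraph V} {n : ℕ} {F : Fin n → Finset (Sym2 V)}
  {I : Finset (Fin n)} {r : Fin n → Sym2 V} {e f : Sym2 V} {i i' i'' : Fin n}

theorem IsMaxRainbow.eq_of_hasPendant (hI : IsMaxRainbow F I r) (h3 : NoCycleOfLength G 3)
    (hFG : ∀ i, ∀ g ∈ F i, g ∈ G.edgeSet) (hf : f ∈ I.image r) (hi : i ∉ I) (hi' : i' ∉ I)
    (hii' : i ≠ i') {x x' : V} (hx : x ∈ f) (hx' : x' ∈ f) (hp : HasPendant (I.image r) (F i) x)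
    (hp' : HasPendant (I.image r) (F i') x') : x = x' := by
  obtain ⟨w, hxw, hw⟩ := hp
  obtain ⟨w', hxw', hw'⟩ := hp'
  by_contra hxx'
  have hR := hI.1.isEdgeMatching_image
  obtain rfl : f = s(x, x') := (Sym2.mem_and_mem_iff hxx').1 ⟨hx, hx'⟩
  -- the two pendants close a triangle with `f`, or can replace `f`
  by_cases hww' : w = w'
  · subst hww'
    exact h3.not_adj_of_adj_of_adj (hI.1.mem_edgeSet_of_mem_image hFG hf) (hFG i' _ hxw')
      (hFG i _ hxw).symm
  · refine hI.false_of_exchange_two {s(x, x')} (by simp) hi hi' hii' hxw hxw'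
      (not_meets_mk_mk.2 ⟨hxx', (hw'.ne_of_mem hf hx).symm, hw.ne_of_mem hf hx', hww'⟩)
      (Sym2.ball.2 ⟨hR.uncovered_sdiff hf hx (mem_singleton_self _), hw.mono sdiff_subset⟩)
      (Sym2.ball.2 ⟨hR.uncovered_sdiff hf hx' (mem_singleton_self _), hw'.mono sdiff_subset⟩)

/-- The path `u a b c d w` closes a 5-cycle if `u = w`; otherwise `ua`, `bc`, `dw` can replace
`ab` and `cd`. -/
theorem IsMaxRainbow.false_of_alternating_path (hI : IsMaxRainbow F I r)
    (h5 : NoCycleOfLength G 5) (hFG : ∀ i, ∀ g ∈ F i, g ∈ G.edgeSet) {a b c d : V}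
    (he : s(a, b) ∈ I.image r) (hf : s(c, d) ∈ I.image r) (hef : s(a, b) ≠ s(c, d))
    (hi : i ∉ I) (hi' : i' ∉ I) (hi'' : i'' ∉ I) (hii' : i ≠ i') (hii'' : i ≠ i'')
    (hi'i'' : i' ≠ i'') (ha : HasPendant (I.image r) (F i) a) (hbc : s(b, c) ∈ F i')
    (hd : HasPendant (I.image r) (F i'') d) : False := by
  obtain ⟨u, hau, hu⟩ := ha
  obtain ⟨w, hdw, hw⟩ := hd
  have hR := hI.1.isEdgeMatching_image
  have hab : G.Adj a b := hI.1.mem_edgeSet_of_mem_image hFG he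
  have hcd : G.Adj c d := hI.1.mem_edgeSet_of_mem_image hFG hf
  obtain ⟨hac, had, hbc', hbd⟩ := not_meets_mk_mk.1 (hR he hf hef)
  have hua := hu.ne_of_mem he (Sym2.mem_mk_left a b)
  have hub := hu.ne_of_mem he (Sym2.mem_mk_right a b)
  have huc := hu.ne_of_mem hf (Sym2.mem_mk_left c d)
  have hud := hu.ne_of_mem hf (Sym2.mem_mk_right c d)
  have hwa := hw.ne_of_mem he (Sym2.mem_mk_left a b)
  have hwb := hw.ne_of_mem he (Sym2.mem_mk_right a b)
  have hwc := hw.ne_of_mem hf (Sym2.mem_mk_left c d)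
  have huw : u ≠ w := by
    rintro rfl
    exact h5.not_adj_of_path_four hab (hFG i' _ hbc) hcd (hFG i'' _ hdw) hac had hbd hub.symm
      huc.symm (hFG i _ hau).symm
  have hsep : ∀ {x}, x ∈ s(a, b) ∨ x ∈ s(c, d) →
      Uncovered (I.image r \ {s(a, b), s(c, d)}) x := by
    rintro x (hx | hx)
    · exact hR.uncovered_sdiff he hx (by simp)
    · exact hR.uncovered_sdiff hf hx (by simp)
  refine hI.false_of_exchange_three {s(a, b), s(c, d)} ((card_le_two).trans_lt (by omega))
    hi hi' hi'' hii' hii'' hi'i'' hau hbc hdw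
    (not_meets_mk_mk.2 ⟨hab.ne, hac, hub, huc⟩)
    (not_meets_mk_mk.2 ⟨had, hwa.symm, hud, huw⟩)
    (not_meets_mk_mk.2 ⟨hbd, hwb.symm, hcd.ne, hwc.symm⟩)
    (Sym2.ball.2 ⟨hsep (.inl (Sym2.mem_mk_left a b)), hu.mono sdiff_subset⟩)
    (Sym2.ball.2 ⟨hsep (.inl (Sym2.mem_mk_right a b)), hsep (.inr (Sym2.mem_mk_left c d))⟩)
    (Sym2.ball.2 ⟨hsep (.inr (Sym2.mem_mk_right c d)), hw.mono sdiff_subset⟩)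

theorem IsMaxRainbow.not_hasPendant_of_halfWastefulPair (hI : IsMaxRainbow F I r)
    (h3 : NoCycleOfLength G 3) (h5 : NoCycleOfLength G 5) (hFG : ∀ i, ∀ g ∈ F i, g ∈ G.edgeSet)
    (hFM : ∀ i, IsEdgeMatching (F i)) (he : e ∈ I.image r) (hf : f ∈ I.image r) (hef : e ≠ f)
    (hi : i ∉ I) (hi' : i' ∉ I) (hi'' : i'' ∉ I) (hii' : i ≠ i') (hii'' : i ≠ i'')
    (hi'i'' : i' ≠ i'') (hp : HalfWastefulPair (I.image r) (F i) e f)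
    (hw : HalfWasteful (I.image r) (F i'') e) {x : V} (hx : x ∈ f) :
    ¬ HasPendant (I.image r) (F i') x := by
  intro hx'
  have hR := hI.1.isEdgeMatching_image
  have hFd : ∀ i, ∀ g ∈ F i, ¬ g.IsDiag := fun i g hg => G.not_isDiag_of_mem_edgeSet (hFG i g hg)
  obtain ⟨a, b, c, d, rfl, rfl, hbc, ha, hd⟩ := hp.exists_path hR (hFM i) (hFd i) he hf hef
  obtain ⟨y, hy, hy'⟩ := hw.exists_hasPendant hR (hFM i'') (hFd i'') he
  obtain rfl := hI.eq_of_hasPendant h3 hFG hf hi hi' hii' (Sym2.mem_mk_right c d) hx hd hx'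
  obtain rfl := hI.eq_of_hasPendant h3 hFG he hi hi'' hii'' (Sym2.mem_mk_left a b) hy ha hy'
  exact hI.false_of_alternating_path h5 hFG he hf hef hi'' hi hi' hii''.symm hi'i''.symm hii'
    hy' hbc hx'

end Maximality

theorem Finset.exists_mem_ne_ne {α : Type*} [DecidableEq α] {s : Finset α} (hs : 2 < s.card)
    (a b : α) : ∃ c ∈ s, c ≠ a ∧ c ≠ b := by
  obtain ⟨c, hc⟩ : ((s.erase a).erase b).Nonempty := by
    rw [← card_pos]
    have h₁ := pred_card_le_card_erase (s := s) (a := a)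
    have h₂ := pred_card_le_card_erase (s := s.erase a) (a := b)
    omega
  obtain ⟨hcb, hc⟩ := mem_erase.1 hc
  obtain ⟨hca, hc⟩ := mem_erase.1 hc
  exact ⟨c, hc, hca, hcb⟩

section Degree

variable {V : Type*} {n : ℕ} {F : Fin n → Finset (Sym2 V)} {I : Finset (Fin n)}
  {R A : Finset (Sym2 V)} {e e' : Sym2 V} {i j : Fin n}

open Classical in
noncomputable def wastefulColors (F : Fin n → Finset (Sym2 V)) (I : Finset (Fin n))
    (R : Finset (Sym2 V)) (e : Sym2 V) : Finset (Fin n) :=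
  univ.filter fun i => i ∉ I ∧ HalfWasteful R (F i) e

theorem mem_wastefulColors : i ∈ wastefulColors F I R e ↔ i ∉ I ∧ HalfWasteful R (F i) e := by
  simp [wastefulColors]

theorem hwDeg_eq_card : hwDeg F I R e = (wastefulColors F I R e).card := by
  rw [hwDeg, ← Set.ncard_coe_finset]
  congr
  ext i
  simp [mem_wastefulColors]

open Classical in
noncomputable def partner (R A : Finset (Sym2 V)) (e : Sym2 V) : Sym2 V :=
  if h : HalfWasteful R A e then h.choose else e

theorem HalfWasteful.partner_spec (h : HalfWasteful R A e) :
    partner R A e ∈ R ∧ partner R A e ≠ e ∧ HalfWastefulPair R A e (partner R A e) := by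
  rw [partner, dif_pos h]
  exact h.choose_spec

theorem mem_wastefulColors_partner (he : e ∈ R) (hi : i ∈ wastefulColors F I R e) :
    i ∈ wastefulColors F I R (partner R (F i) e) := by
  obtain ⟨hiI, hw⟩ := mem_wastefulColors.1 hi
  obtain ⟨-, hfe, hp⟩ := hw.partner_spec
  exact mem_wastefulColors.2 ⟨hiI, e, he, hfe.symm, hp.symm⟩

theorem eq_of_partner_eq (hR : IsEdgeMatching R) (hA : IsEdgeMatching (F i))
    (hAd : ∀ g ∈ F i, ¬ g.IsDiag) (he : e ∈ R) (he' : e' ∈ R) (hi : i ∈ wastefulColors F I R e)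
    (hj : j ∈ wastefulColors F I R e')
    (hsingle : wastefulColors F I R (partner R (F i) e) = {i})
    (h : partner R (F j) e' = partner R (F i) e) : j = i ∧ e = e' := by
  have hji := mem_wastefulColors_partner he' hj
  rw [h, hsingle, mem_singleton] at hji
  subst hji
  obtain ⟨hfR, hfe, hp⟩ := (mem_wastefulColors.1 hi).2.partner_spec
  obtain ⟨-, hfe', hp'⟩ := (mem_wastefulColors.1 hj).2.partner_spec
  rw [h] at hfe' hp'
  exact ⟨rfl, hp.left_unique hR hA hAd he he' hfR hfe.symm hfe'.symm hp'⟩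

variable [DecidableEq V] {G : SimpleGraph V} {r : Fin n → Sym2 V}

theorem IsMaxRainbow.wastefulColors_partner (hI : IsMaxRainbow F I r) (h3 : NoCycleOfLength G 3)
    (h5 : NoCycleOfLength G 5) (hFG : ∀ i, ∀ g ∈ F i, g ∈ G.edgeSet)
    (hFM : ∀ i, IsEdgeMatching (F i)) (he : e ∈ I.image r)
    (hdeg : 2 < (wastefulColors F I (I.image r) e).card)
    (hi : i ∈ wastefulColors F I (I.image r) e) :
    wastefulColors F I (I.image r) (partner (I.image r) (F i) e) = {i} := by
  refine eq_singleton_iff_unique_mem.2 ⟨mem_wastefulColors_partner he hi, fun j hj => ?_⟩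
  obtain ⟨hiI, hw⟩ := mem_wastefulColors.1 hi
  obtain ⟨hfR, hfe, hp⟩ := hw.partner_spec
  obtain ⟨hjI, hjw⟩ := mem_wastefulColors.1 hj
  by_contra hji
  obtain ⟨x, hx, hx'⟩ := hjw.exists_hasPendant hI.1.isEdgeMatching_image (hFM j)
    (fun g hg => G.not_isDiag_of_mem_edgeSet (hFG j g hg)) hfR
  obtain ⟨k, hk, hki, hkj⟩ := exists_mem_ne_ne hdeg i j
  obtain ⟨hkI, hkw⟩ := mem_wastefulColors.1 hk
  exact hI.not_hasPendant_of_halfWastefulPair h3 h5 hFG hFM he hfR hfe.symm hiI hjI hkI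
    (Ne.symm hji) hki.symm hkj.symm hp hkw hx hx'

end Degree

theorem stmt_14_general {V : Type*} [DecidableEq V] (G : SimpleGraph V) (n : ℕ)
    (hfree : ∀ (v : V) (w : G.Walk v v), w.IsCycle → w.length ≠ 3 ∧ w.length ≠ 5)
    (F : Fin n → Finset (Sym2 V))
    (hedges : ∀ i, ∀ e ∈ F i, e ∈ G.edgeSet)
    (hmatch : ∀ i, ∀ e ∈ F i, ∀ f ∈ F i, e ≠ f → ∀ v, v ∈ e → v ∉ f)
    (I : Finset (Fin n)) (c : Fin n → Sym2 V)
    (hc : ∀ i ∈ I, c i ∈ F i)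
    (hdisj : ∀ i ∈ I, ∀ j ∈ I, i ≠ j → ∀ v, v ∈ c i → v ∉ c j)
    (hmax : ∀ (J : Finset (Fin n)) (d : Fin n → Sym2 V),
      (∀ i ∈ J, d i ∈ F i) →
      (∀ i ∈ J, ∀ j ∈ J, i ≠ j → ∀ v, v ∈ d i → v ∉ d j) →
      J.card ≤ I.card) :
    ∃ S : Sym2 V → Finset (Sym2 V),
      ∀ e ∈ I.image c, 3 ≤ hwDeg F I (I.image c) e →
        S e ⊆ I.image c ∧
        (S e).card = hwDeg F I (I.image c) e ∧
        (∀ f ∈ S e, hwDeg F I (I.image c) f = 1) ∧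
        ∀ e' ∈ I.image c, 3 ≤ hwDeg F I (I.image c) e' → e ≠ e' →
          Disjoint (S e) (S e') := by
  have hI : IsMaxRainbow F I c :=
    ⟨⟨hc, fun i hi j hj hij => not_meets_iff.2 (hdisj i hi j hj hij)⟩,
      fun J d hd => hmax J d hd.1 fun i hi j hj hij => not_meets_iff.1 (hd.2 hi hj hij)⟩
  have hFM : ∀ i, IsEdgeMatching (F i) :=
    fun i e he f hf hef => not_meets_iff.2 (hmatch i e he f hf hef)
  have hFd : ∀ i, ∀ g ∈ F i, ¬ g.IsDiag :=
    fun i g hg => G.not_isDiag_of_mem_edgeSet (hedges i g hg)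
  have key := fun {e} {i} (he : e ∈ I.image c) (hdeg : 3 ≤ hwDeg F I (I.image c) e) =>
    hI.wastefulColors_partner (i := i) (fun v w hw => (hfree v w hw).1)
      (fun v w hw => (hfree v w hw).2) hedges hFM he (hwDeg_eq_card ▸ hdeg)
  refine ⟨fun e => (wastefulColors F I (I.image c) e).image fun i => partner (I.image c) (F i) e,
    fun e he hdeg => ⟨?_, ?_, ?_, fun e' he' _ hee' => ?_⟩⟩
  · intro f hf
    obtain ⟨i, hi, rfl⟩ := mem_image.1 hf
    exact (mem_wastefulColors.1 hi).2.partner_spec.1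
  · rw [hwDeg_eq_card]
    exact card_image_of_injOn fun i hi j hj hij =>
      (eq_of_partner_eq hI.1.isEdgeMatching_image (hFM i) (hFd i) he he hi hj
        (key he hdeg hi) hij.symm).1.symm
  · intro f hf
    obtain ⟨i, hi, rfl⟩ := mem_image.1 hf
    rw [hwDeg_eq_card, key he hdeg hi, card_singleton]
  · refine disjoint_left.2 fun f hf hf' => ?_
    obtain ⟨i, hi, rfl⟩ := mem_image.1 hf
    obtain ⟨j, hj, hij⟩ := mem_image.1 hf'
    exact hee' (eq_of_partner_eq hI.1.isEdgeMatching_image (hFM i) (hFd i) he he' hi hj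
      (key he hdeg hi) hij).2

/-- In a graph with no 3-cycle and no 5-cycle, with `F₁, …, Fₙ`
matchings of size `n` and `R = I.image c` a maximum-size rainbow matching: letting
`deg e` be the number of unrepresented matchings `Fᵢ` for which `e` is
half-`Fᵢ`-wasteful and `D = {e ∈ R : deg e ≥ 3}`, there are sets `S(e) ⊆ R` for `e ∈ D`
with `|S(e)| = deg e`, every `f ∈ S(e)` having `deg f = 1`, and `S(e) ∩ S(e') = ∅` for
distinct `e, e' ∈ D`. -/
theorem stmt_14 {V : Type*} [DecidableEq V] (G : SimpleGraph V) (n : ℕ)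
    (hfree : ∀ (v : V) (w : G.Walk v v), w.IsCycle → w.length ≠ 3 ∧ w.length ≠ 5)
    (F : Fin n → Finset (Sym2 V))
    (hedges : ∀ i, ∀ e ∈ F i, e ∈ G.edgeSet)
    (hmatch : ∀ i, ∀ e ∈ F i, ∀ f ∈ F i, e ≠ f → ∀ v, v ∈ e → v ∉ f)
    (hsize : ∀ i, (F i).card = n)
    (I : Finset (Fin n)) (c : Fin n → Sym2 V)
    (hc : ∀ i ∈ I, c i ∈ F i)
    (hdisj : ∀ i ∈ I, ∀ j ∈ I, i ≠ j → ∀ v, v ∈ c i → v ∉ c j)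
    (hmax : ∀ (J : Finset (Fin n)) (d : Fin n → Sym2 V),
      (∀ i ∈ J, d i ∈ F i) →
      (∀ i ∈ J, ∀ j ∈ J, i ≠ j → ∀ v, v ∈ d i → v ∉ d j) →
      J.card ≤ I.card) :
    ∃ S : Sym2 V → Finset (Sym2 V),
      ∀ e ∈ I.image c, 3 ≤ hwDeg F I (I.image c) e →
        S e ⊆ I.image c ∧
        (S e).card = hwDeg F I (I.image c) e ∧
        (∀ f ∈ S e, hwDeg F I (I.image c) f = 1) ∧
        ∀ e' ∈ I.image c, 3 ≤ hwDeg F I (I.image c) e' → e ≠ e' →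
          Disjoint (S e) (S e') :=
  stmt_14_general G n hfree F hedges hmatch I c hc hdisj hmax
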